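/- Fix a nonzero vector (x₀, y₀) ∈ ℂ², and let D_{[x₀:y₀]} = { [x : y : z] ∈ ℙ(ℂ³) | (x, y) is a nonzero scalar multiple of (x₀, y₀) and |z|² ≤ |x|² + |y|² }. Then D_{[x₀:y₀]} is homeomorphic to the closed unit disk {w : ℂ | ‖w‖ ≤ 1}; an explicit homeomorphism is induced by w ↦ [x₀ : y₀ : w·√(|x₀|² + |y₀|²)]. -/

import Mathlib

/-- The projectivization `ℙ(ℂ³)` carries the quotient topology from `{v : ℂ³ // v ≠ 0}`. -/
noncomputable instance : TopologicalSpace (Projectivization ℂ (ℂ × ℂ × ℂ)) :=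
  instTopologicalSpaceQuotient

/-- The disk `D_{[x₀:y₀]} = {[x : y : z] | (x, y) ∥ (x₀, y₀), |z|² ≤ |x|² + |y|²}` in
`ℙ(ℂ³)`. -/
def projDisk (x₀ y₀ : ℂ) : Set (Projectivization ℂ (ℂ × ℂ × ℂ)) :=
  {P | ∃ (x y z : ℂ) (h : ((x, y, z) : ℂ × ℂ × ℂ) ≠ 0),
    P = Projectivization.mk ℂ ((x, y, z) : ℂ × ℂ × ℂ) h ∧
    (∃ c : ℂ, c ≠ 0 ∧ (x, y) = c • ((x₀, y₀) : ℂ × ℂ)) ∧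
    ‖z‖ ^ 2 ≤ ‖x‖ ^ 2 + ‖y‖ ^ 2}

/-!
On the open set of `ℙ(ℂ³)` where `x x̄₀ + y ȳ₀ ≠ 0` the affine coordinate
`[x : y : z] ↦ z n / (x x̄₀ + y ȳ₀)`, with `n = √(|x₀|² + |y₀|²)`, is continuous, since a quotient
map stays a quotient map over an open set. This open set contains `D_{[x₀:y₀]}`, and there the
coordinate inverts `w ↦ [x₀ : y₀ : w n]`, which maps the closed unit disk onto `D_{[x₀:y₀]}`.
-/

open Complex ComplexConjugate
open scoped LinearAlgebra.Projectivization

namespace Projectivization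

section Field

variable {K V : Type*} [Field K] [AddCommGroup V] [Module K V]

/-- Takes the junk value `0` on `ℙ(ker φ)`. -/
def ratio (ψ φ : V →ₗ[K] K) : ℙ K V → K :=
  Projectivization.lift (fun v => ψ v / φ v) fun a b t hab => by
    have ht : t ≠ 0 := by rintro rfl; exact a.2 (by simpa using hab)
    rw [hab, map_smul, map_smul, smul_eq_mul, smul_eq_mul, mul_div_mul_left _ _ ht]

def affineChart (φ : V →ₗ[K] K) : Set (ℙ K V) :=
  {P | ¬P.submodule ≤ LinearMap.ker φ}

theorem ratio_mk (ψ φ : V →ₗ[K] K) (v : V) (hv : v ≠ 0) :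
    ratio ψ φ (mk K v hv) = ψ v / φ v :=
  rfl

theorem mk_mem_affineChart_iff (φ : V →ₗ[K] K) (v : V) (hv : v ≠ 0) :
    mk K v hv ∈ affineChart φ ↔ φ v ≠ 0 := by
  simp [affineChart, submodule_mk, Submodule.span_singleton_le_iff_mem]

end Field

theorem isQuotientMap_mk' : Topology.IsQuotientMap (mk' ℂ : {v : ℂ × ℂ × ℂ // v ≠ 0} → _) :=
  isQuotientMap_quotient_mk'

theorem isOpen_affineChart (φ : ℂ × ℂ × ℂ →ₗ[ℂ] ℂ) :
    IsOpen (affineChart φ : Set (ℙ ℂ (ℂ × ℂ × ℂ))) := by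
  have hpre : mk' ℂ ⁻¹' affineChart φ = {v : {v : ℂ × ℂ × ℂ // v ≠ 0} | φ v ≠ 0} :=
    Set.ext fun v => mk_mem_affineChart_iff φ v.1 v.2
  rw [← isQuotientMap_mk'.isOpen_preimage, hpre]
  exact isOpen_ne_fun ((LinearMap.continuous_of_finiteDimensional φ).comp continuous_subtype_val)
    continuous_const

theorem continuousOn_ratio_affineChart (ψ φ : ℂ × ℂ × ℂ →ₗ[ℂ] ℂ) :
    ContinuousOn (ratio ψ φ) (affineChart φ : Set (ℙ ℂ (ℂ × ℂ × ℂ))) := by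
  have hq := isQuotientMap_mk'.restrictPreimage_isOpen (isOpen_affineChart φ)
  rw [continuousOn_iff_continuous_domRestrict, hq.continuous_iff]
  have hφ := LinearMap.continuous_of_finiteDimensional φ
  have hψ := LinearMap.continuous_of_finiteDimensional ψ
  exact ((hψ.comp continuous_subtype_val).comp continuous_subtype_val).div
    ((hφ.comp continuous_subtype_val).comp continuous_subtype_val)
    fun v => (mk_mem_affineChart_iff φ v.1.1 v.1.2).1 v.2

end Projectivization

open Projectivization

namespace ProjDisk

variable (x₀ y₀ : ℂ)

noncomputable def radius : ℝ := Real.sqrt (‖x₀‖ ^ 2 + ‖y₀‖ ^ 2)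

def pairing : ℂ × ℂ × ℂ →ₗ[ℂ] ℂ where
  toFun v := v.1 * conj x₀ + v.2.1 * conj y₀
  map_add' v w := by simp only [Prod.fst_add, Prod.snd_add]; ring
  map_smul' a v := by simp only [Prod.smul_fst, Prod.smul_snd, smul_eq_mul, RingHom.id_apply]; ring

noncomputable def scaledZ : ℂ × ℂ × ℂ →ₗ[ℂ] ℂ :=
  (radius x₀ y₀ : ℂ) • (LinearMap.snd ℂ ℂ ℂ ∘ₗ LinearMap.snd ℂ ℂ (ℂ × ℂ))

variable {x₀ y₀}

theorem mk_ne_zero_of_ne_zero (h0 : ((x₀, y₀) : ℂ × ℂ) ≠ 0) (w : ℂ) :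
    ((x₀, y₀, w) : ℂ × ℂ × ℂ) ≠ 0 := by
  simp only [ne_eq, Prod.mk_eq_zero, not_and] at h0 ⊢
  tauto

noncomputable def diskPoint (h0 : ((x₀, y₀) : ℂ × ℂ) ≠ 0) (w : ℂ) : ℙ ℂ (ℂ × ℂ × ℂ) :=
  mk ℂ (x₀, y₀, w * (radius x₀ y₀ : ℂ)) (mk_ne_zero_of_ne_zero h0 _)

theorem radius_pos (h0 : ((x₀, y₀) : ℂ × ℂ) ≠ 0) : 0 < radius x₀ y₀ := by
  refine Real.sqrt_pos.2 ?_
  rcases not_and_or.1 (Prod.mk_eq_zero.not.1 h0) with h | h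
  · have := norm_pos_iff.2 h; positivity
  · have := norm_pos_iff.2 h; positivity

theorem radius_sq : radius x₀ y₀ ^ 2 = ‖x₀‖ ^ 2 + ‖y₀‖ ^ 2 :=
  Real.sq_sqrt (by positivity)

theorem pairing_apply_mk (z : ℂ) : pairing x₀ y₀ (x₀, y₀, z) = (radius x₀ y₀ : ℂ) ^ 2 := by
  simp only [pairing, LinearMap.coe_mk, AddHom.coe_mk]
  rw [← ofReal_pow, radius_sq]
  push_cast
  linear_combination Complex.mul_conj' x₀ + Complex.mul_conj' y₀

theorem diskPoint_mem_affineChart (h0 : ((x₀, y₀) : ℂ × ℂ) ≠ 0) (w : ℂ) :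
    diskPoint h0 w ∈ affineChart (pairing x₀ y₀) := by
  rw [diskPoint, mk_mem_affineChart_iff, pairing_apply_mk]
  exact pow_ne_zero 2 (ofReal_ne_zero.2 (radius_pos h0).ne')

theorem ratio_diskPoint (h0 : ((x₀, y₀) : ℂ × ℂ) ≠ 0) (w : ℂ) :
    ratio (scaledZ x₀ y₀) (pairing x₀ y₀) (diskPoint h0 w) = w := by
  have hn : (radius x₀ y₀ : ℂ) ≠ 0 := ofReal_ne_zero.2 (radius_pos h0).ne'
  rw [diskPoint, ratio_mk, pairing_apply_mk]
  simp only [scaledZ, LinearMap.smul_apply, LinearMap.coe_comp, Function.comp_apply,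
    LinearMap.snd_apply, smul_eq_mul]
  field_simp

theorem diskPoint_mem_projDisk (h0 : ((x₀, y₀) : ℂ × ℂ) ≠ 0) {w : ℂ} (hw : ‖w‖ ≤ 1) :
    diskPoint h0 w ∈ projDisk x₀ y₀ := by
  refine ⟨x₀, y₀, _, _, rfl, ⟨1, one_ne_zero, by simp⟩, ?_⟩
  rw [norm_mul, norm_real, Real.norm_of_nonneg (radius_pos h0).le, mul_pow, ← radius_sq]
  exact mul_le_of_le_one_left (by positivity) (pow_le_one₀ (norm_nonneg w) hw)

theorem exists_diskPoint_eq_of_mem_projDisk (h0 : ((x₀, y₀) : ℂ × ℂ) ≠ 0)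
    {P : ℙ ℂ (ℂ × ℂ × ℂ)} (hP : P ∈ projDisk x₀ y₀) : ∃ w : ℂ, ‖w‖ ≤ 1 ∧ diskPoint h0 w = P := by
  obtain ⟨x, y, z, -, rfl, ⟨c, hc, hxy⟩, hz⟩ := hP
  obtain ⟨rfl, rfl⟩ : x = c * x₀ ∧ y = c * y₀ := by simpa [Prod.ext_iff] using hxy
  have hn := radius_pos h0
  have hcn : 0 < ‖c‖ * radius x₀ y₀ := mul_pos (norm_pos_iff.2 hc) hn
  refine ⟨z / (c * radius x₀ y₀), ?_, ?_⟩
  · have hz' : ‖z‖ ^ 2 ≤ (‖c‖ * radius x₀ y₀) ^ 2 := by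
      rw [mul_pow, radius_sq]
      simpa only [norm_mul, mul_pow, ← mul_add] using hz
    rw [norm_div, norm_mul, norm_real, Real.norm_of_nonneg hn.le, div_le_one hcn]
    exact (pow_le_pow_iff_left₀ (norm_nonneg z) hcn.le two_ne_zero).1 hz'
  · refine (mk_eq_mk_iff' ℂ _ _ _ _).2 ⟨c⁻¹, ?_⟩
    have hn' : (radius x₀ y₀ : ℂ) ≠ 0 := ofReal_ne_zero.2 hn.ne'
    simp only [Prod.smul_mk, smul_eq_mul, Prod.mk.injEq]
    refine ⟨?_, ?_, ?_⟩ <;> field_simp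

theorem continuous_diskPoint (h0 : ((x₀, y₀) : ℂ × ℂ) ≠ 0) : Continuous (diskPoint h0) :=
  isQuotientMap_mk'.continuous.comp (by fun_prop)

end ProjDisk

open ProjDisk in
/-- For nonzero `(x₀, y₀)`, the disk `D_{[x₀:y₀]} ⊆ ℙ(ℂ³)` is homeomorphic to the closed
unit disk in `ℂ`, via the map induced by `w ↦ [x₀ : y₀ : w·√(|x₀|² + |y₀|²)]`. -/
theorem projDisk_homeomorph_disk (x₀ y₀ : ℂ) (h0 : ((x₀, y₀) : ℂ × ℂ) ≠ 0) :
    ∃ e : {w : ℂ // ‖w‖ ≤ 1} ≃ₜ (projDisk x₀ y₀),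
      ∀ w : {w : ℂ // ‖w‖ ≤ 1},
        (e w : Projectivization ℂ (ℂ × ℂ × ℂ)) =
          Projectivization.mk ℂ
            ((x₀, y₀, (w : ℂ) *
              (Real.sqrt (‖x₀‖ ^ 2 + ‖y₀‖ ^ 2) : ℝ)) : ℂ × ℂ × ℂ)
            (by
              simp only [ne_eq, Prod.mk_eq_zero, not_and] at h0 ⊢
              tauto) := by
  have hcoord : ∀ P ∈ projDisk x₀ y₀, ‖ratio (scaledZ x₀ y₀) (pairing x₀ y₀) P‖ ≤ 1 ∧
      diskPoint h0 (ratio (scaledZ x₀ y₀) (pairing x₀ y₀) P) = P := by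
    intro P hP
    obtain ⟨w, hw, rfl⟩ := exists_diskPoint_eq_of_mem_projDisk h0 hP
    rw [ratio_diskPoint]
    exact ⟨hw, rfl⟩
  have hsub : projDisk x₀ y₀ ⊆ affineChart (pairing x₀ y₀) := fun P hP =>
    (hcoord P hP).2 ▸ diskPoint_mem_affineChart h0 _
  refine ⟨{
    toFun w := ⟨diskPoint h0 w, diskPoint_mem_projDisk h0 w.2⟩
    invFun P := ⟨ratio (scaledZ x₀ y₀) (pairing x₀ y₀) P, (hcoord P P.2).1⟩
    left_inv w := Subtype.ext (ratio_diskPoint h0 w)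
    right_inv P := Subtype.ext (hcoord P P.2).2
    continuous_toFun := ((continuous_diskPoint h0).comp continuous_subtype_val).subtype_mk _
    continuous_invFun := (((continuousOn_ratio_affineChart _ _).mono hsub).domRestrict).subtype_mk _
  }, fun w => rfl⟩
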